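/- Let S be a finite subset of Z^2, let K(x,y;t) = 1 - t sum_{(i,j) in S} x^i y^j, let S(x,y;t) in Q[x,x^{-1},y,y^{-1}][[t]] be the generating function for walks on the slit plane with steps in S, let S_0(x;t) be the generating function for bilateral walks on the slit plane, and let B(x;t) be the generating function for bilateral walks. Then, in Q[x,x^{-1},y,y^{-1}][[t]], K(x,y;t) * S(x,y;t) * B(x;t) = S_0(x;t). -/

import Mathlib

open scoped Classical
open PowerSeries

namespace SlitPlane

/-- A point (or step) of the lattice `ℤ²`. -/
abbrev Pt := ℤ × ℤ

/-- All steps of the walk `l` belong to `S`.  A walk is identified with its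
list of steps; it starts at the origin. -/
def StepsIn (S : Finset Pt) (l : List Pt) : Prop := ∀ s ∈ l, s ∈ S

/-- The vertex `w_i` of the walk reached after `i` steps. -/
def vert (l : List Pt) (i : ℕ) : Pt := (l.take i).sum

/-- Membership in the half-line `H = {(k,0) : k ≤ 0}`. -/
def OnH (p : Pt) : Prop := p.2 = 0 ∧ p.1 ≤ 0

/-- Membership in the half-line `{(k,0) : k < 0}`. -/
def OnNegAxis (p : Pt) : Prop := p.2 = 0 ∧ p.1 < 0

/-- A walk on the slit plane: none of the vertices `w_1, ..., w_n` lies on `H`. -/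
def AvoidsH (l : List Pt) : Prop := ∀ i, 1 ≤ i → i ≤ l.length → ¬ OnH (vert l i)

/-- Number of walks of length `n` on the slit plane, with steps in `S`, ending at `e`. -/
noncomputable def slitCount (S : Finset Pt) (n : ℕ) (e : Pt) : ℕ :=
  Set.ncard {l : List Pt | l.length = n ∧ StepsIn S l ∧ AvoidsH l ∧ l.sum = e}

/-- Number of (unconstrained) walks of length `n` with steps in `S` ending at `e`. -/
noncomputable def walkCount (S : Finset Pt) (n : ℕ) (e : Pt) : ℕ :=
  Set.ncard {l : List Pt | l.length = n ∧ StepsIn S l ∧ l.sum = e}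

/-- Number of loops of length `n` with steps in `S`: walks ending at the origin,
none of whose vertices lies on `{(k,0) : k < 0}`. -/
noncomputable def loopCount (S : Finset Pt) (n : ℕ) : ℕ :=
  Set.ncard {l : List Pt | l.length = n ∧ StepsIn S l ∧
    (∀ i ≤ l.length, ¬ OnNegAxis (vert l i)) ∧ l.sum = (0, 0)}

end SlitPlane

namespace SlitPlane

/-- The Laurent polynomial ring `ℚ[x, x⁻¹]`: monomial `i` stands for `x^i`. -/
abbrev L1 := AddMonoidAlgebra ℚ ℤ

/-- The Laurent polynomial ring `ℚ[x, x⁻¹, y, y⁻¹]`: monomial `(i,j)` stands for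
`x^i y^j`. -/
abbrev L2 := AddMonoidAlgebra ℚ (ℤ × ℤ)

/-- The embedding `ℚ[x,x⁻¹] → ℚ[x,x⁻¹,y,y⁻¹]`. -/
noncomputable def iotaX : L1 →+* L2 :=
  AddMonoidAlgebra.mapDomainRingHom ℚ (AddMonoidHom.inl ℤ ℤ)

/-- The polynomial `K(x,y;t) = 1 - t ∑_{(i,j) ∈ S} x^i y^j`, as a power series in `t`. -/
noncomputable def Kpoly (S : Finset Pt) : PowerSeries L2 :=
  1 - PowerSeries.X * PowerSeries.C (R := L2) (∑ s ∈ S, AddMonoidAlgebra.single s (1 : ℚ))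

/-!
Let `F` be the generating function of the walks whose endpoint is their first vertex on `H`.
Appending a step to a walk on the slit plane yields either a nonempty walk on the slit plane or
such a first-hit walk, hence `K S = 1 - F`. Cutting a bilateral walk that meets `H` at its first
visit to `H` leaves a bilateral walk, hence `B = S₀ + F B`. So `K S B = B - F B = S₀`.
-/

open Finset

noncomputable def walks (S : Finset Pt) : ℕ → Finset (List Pt)
  | 0 => {[]}
  | n + 1 => (S ×ˢ walks S n).image fun p => p.1 :: p.2

theorem mem_walks {S : Finset Pt} {n : ℕ} {l : List Pt} :
    l ∈ walks S n ↔ l.length = n ∧ StepsIn S l := by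
  induction n generalizing l with
  | zero => cases l <;> simp [walks, StepsIn]
  | succ n ih =>
    cases l with
    | nil => simp [walks]
    | cons s l => simp [walks, ih, StepsIn, and_left_comm]

theorem ncard_setOf_eq_card_walks (S : Finset Pt) (n : ℕ) (P : List Pt → Prop)
    [DecidablePred P] :
    {l : List Pt | l.length = n ∧ StepsIn S l ∧ P l}.ncard = #{l ∈ walks S n | P l} := by
  rw [← Set.ncard_coe_finset]
  congr 1
  ext l
  simp [mem_walks, and_assoc]

theorem stepsIn_append {S : Finset Pt} {a b : List Pt} :
    StepsIn S (a ++ b) ↔ StepsIn S a ∧ StepsIn S b := by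
  simp [StepsIn, or_imp, forall_and]

noncomputable def walkGF (S : Finset Pt) (P : List Pt → Prop) : PowerSeries L2 :=
  PowerSeries.mk fun n => ∑ l ∈ walks S n with P l, AddMonoidAlgebra.single l.sum 1

theorem coeff_walkGF (S : Finset Pt) (P : List Pt → Prop) (n : ℕ) :
    coeff n (walkGF S P) = ∑ l ∈ walks S n with P l, AddMonoidAlgebra.single l.sum 1 :=
  PowerSeries.coeff_mk _ _

theorem coeff_coeff_walkGF (S : Finset Pt) (P : List Pt → Prop) (n : ℕ) (e : Pt) :
    (coeff n (walkGF S P)).coeff e = #{l ∈ walks S n | P l ∧ l.sum = e} := by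
  rw [coeff_walkGF, AddMonoidAlgebra.coeff_sum, Finset.sum_apply', ← Finset.filter_filter,
    ← Finset.sum_boole]
  refine Finset.sum_congr rfl fun l _ => ?_
  rw [AddMonoidAlgebra.coeff_single, Finsupp.single_apply]

theorem walkGF_congr (S : Finset Pt) {P Q : List Pt → Prop} (h : ∀ l, P l ↔ Q l) :
    walkGF S P = walkGF S Q := by
  rw [funext fun l => propext (h l)]

theorem walkGF_eq_add (S : Finset Pt) (P Q : List Pt → Prop) :
    walkGF S P = walkGF S (fun l => P l ∧ Q l) + walkGF S (fun l => P l ∧ ¬ Q l) := by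
  ext1 n
  simp only [map_add, coeff_walkGF, Finset.sum_filter, ← Finset.sum_add_distrib]
  refine Finset.sum_congr rfl fun l _ => ?_
  by_cases hP : P l <;> by_cases hQ : Q l <;> simp [hP, hQ]

theorem walkGF_nil (S : Finset Pt) : walkGF S (· = []) = 1 := by
  ext1 n
  rw [coeff_walkGF, coeff_one, Finset.sum_filter]
  cases n with
  | zero => simp [walks, AddMonoidAlgebra.one_def]
  | succ n =>
    rw [if_neg n.succ_ne_zero]
    refine Finset.sum_eq_zero fun l hl => if_neg ?_
    rintro rfl
    simp [mem_walks] at hl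

theorem walkGF_length_eq_one (S : Finset Pt) :
    walkGF S (·.length = 1) = X * C (∑ s ∈ S, AddMonoidAlgebra.single s 1) := by
  ext1 n
  rw [coeff_walkGF, Finset.sum_filter]
  rcases n with _ | _ | n
  · simp [walks]
  · rw [coeff_succ_X_mul, coeff_zero_C, walks, walks, Finset.sum_image (by simp),
      Finset.sum_product]
    simp
  · rw [coeff_succ_X_mul, coeff_C, if_neg n.succ_ne_zero]
    refine Finset.sum_eq_zero fun l hl => if_neg ?_
    rw [(mem_walks.1 hl).1]
    omega

theorem walkGF_mul (S : Finset Pt) (P Q : List Pt → Prop)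
    (hunique : ∀ a b a' b', P a → Q b → P a' → Q b' → a ++ b = a' ++ b' → a = a') :
    walkGF S P * walkGF S Q = walkGF S (fun l => ∃ a b, P a ∧ Q b ∧ a ++ b = l) := by
  ext1 n
  simp only [coeff_mul, coeff_walkGF, Finset.sum_mul_sum, AddMonoidAlgebra.single_mul_single,
    mul_one, ← List.sum_append]
  simp only [Finset.sum_sigma']
  refine Finset.sum_bij (fun x _ => x.2.1 ++ x.2.2) ?_ ?_ ?_ fun _ _ => rfl
  · rintro ⟨⟨i, j⟩, a, b⟩ hx
    simp only [Finset.mem_sigma, Finset.mem_filter, mem_walks,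
      Finset.HasAntidiagonal.mem_antidiagonal] at hx ⊢
    obtain ⟨rfl, ⟨⟨rfl, ha⟩, hPa⟩, ⟨rfl, hb⟩, hQb⟩ := hx
    exact ⟨⟨List.length_append, stepsIn_append.2 ⟨ha, hb⟩⟩, a, b, hPa, hQb, rfl⟩
  · rintro ⟨⟨i, j⟩, a, b⟩ hx ⟨⟨i', j'⟩, a', b'⟩ hx' h
    simp only [Finset.mem_sigma, Finset.mem_filter, mem_walks,
      Finset.HasAntidiagonal.mem_antidiagonal] at hx hx' h
    obtain ⟨-, ⟨⟨rfl, -⟩, hPa⟩, ⟨rfl, -⟩, hQb⟩ := hx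
    obtain ⟨-, ⟨⟨rfl, -⟩, hPa'⟩, ⟨rfl, -⟩, hQb'⟩ := hx'
    obtain rfl := hunique a b a' b' hPa hQb hPa' hQb' h
    obtain rfl := List.append_cancel_left h
    rfl
  · intro l hl
    simp only [Finset.mem_filter, mem_walks] at hl
    obtain ⟨⟨rfl, hl⟩, a, b, hPa, hQb, rfl⟩ := hl
    refine ⟨⟨(a.length, b.length), a, b⟩, ?_, rfl⟩
    simp only [Finset.mem_sigma, Finset.mem_filter, mem_walks,
      Finset.HasAntidiagonal.mem_antidiagonal, List.length_append, true_and]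
    obtain ⟨ha, hb⟩ := stepsIn_append.1 hl
    exact ⟨⟨ha, hPa⟩, hb, hQb⟩

theorem walkGF_eq_of_coeff {F : PowerSeries L2} {S : Finset Pt} {P : List Pt → Prop}
    (hF : ∀ n e, (coeff n F).coeff e = #{l ∈ walks S n | P l ∧ l.sum = e}) :
    F = walkGF S P := by
  ext n : 1
  exact AddMonoidAlgebra.ext <| Finsupp.ext fun e => by rw [hF, coeff_coeff_walkGF]

theorem coeff_iotaX (f : L1) (e : Pt) :
    (iotaX f).coeff e = if e.2 = 0 then f.coeff e.1 else 0 := by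
  obtain ⟨i, j⟩ := e
  rw [iotaX, AddMonoidAlgebra.mapDomainRingHom_apply, AddMonoidAlgebra.coeff_mapDomain]
  split_ifs with hj
  · dsimp only at hj
    subst hj
    exact Finsupp.mapDomain_apply (fun _ _ h => congrArg Prod.fst h) _ i
  · exact Finsupp.mapDomain_of_notMem_range _ _ fun ⟨k, hk⟩ => hj (congrArg Prod.snd hk).symm

theorem map_iotaX_eq_walkGF {F : PowerSeries L1} {S : Finset Pt} {P : List Pt → Prop}
    (hP : ∀ l, P l → l.sum.2 = 0)
    (hF : ∀ n i, (coeff n F).coeff i = #{l ∈ walks S n | P l ∧ l.sum = (i, 0)}) :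
    map iotaX F = walkGF S P := by
  refine walkGF_eq_of_coeff fun n ⟨i, j⟩ => ?_
  rw [coeff_map, coeff_iotaX]
  split_ifs with hj
  · dsimp only at hj
    rw [hj, hF]
  · rw [eq_comm, Nat.cast_eq_zero, Finset.card_eq_zero, Finset.filter_eq_empty_iff]
    rintro l - ⟨hl, hsum⟩
    exact hj (hsum ▸ hP l hl)

theorem avoidsH_iff_forall_prefix {l : List Pt} :
    AvoidsH l ↔ ∀ p, p <+: l → p ≠ [] → ¬ OnH p.sum := by
  constructor
  · intro h p hp hne
    rw [List.prefix_iff_eq_take.1 hp]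
    exact h _ (List.length_pos_iff.2 hne) hp.length_le
  · intro h i hi hil
    refine h _ (List.take_prefix i l) fun hnil => ?_
    have := congrArg List.length hnil
    simp only [List.length_take, List.length_nil] at this
    omega

theorem AvoidsH.not_onH_of_prefix {l p : List Pt} (h : AvoidsH l) (hp : p <+: l)
    (hne : p ≠ []) : ¬ OnH p.sum :=
  avoidsH_iff_forall_prefix.1 h p hp hne

theorem avoidsH_nil : AvoidsH [] :=
  avoidsH_iff_forall_prefix.2 fun _ hp hne => absurd (List.prefix_nil.1 hp) hne

theorem avoidsH_append_singleton {a : List Pt} {s : Pt} :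
    AvoidsH (a ++ [s]) ↔ AvoidsH a ∧ ¬ OnH (a ++ [s]).sum := by
  simp [avoidsH_iff_forall_prefix, List.prefix_concat_iff, or_imp, forall_and, and_comm]

def FirstHit (l : List Pt) : Prop := ∃ a s, a ++ [s] = l ∧ AvoidsH a ∧ OnH l.sum

theorem FirstHit.ne_nil {l : List Pt} (h : FirstHit l) : l ≠ [] := by
  obtain ⟨a, s, rfl, -⟩ := h
  simp

theorem FirstHit.onH_sum {l : List Pt} (h : FirstHit l) : OnH l.sum := by
  obtain ⟨-, -, -, -, hon⟩ := h
  exact hon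

theorem FirstHit.eq_of_prefix {l l' : List Pt} (h : FirstHit l) (h' : FirstHit l')
    (hp : l <+: l') : l = l' := by
  obtain ⟨a, s, rfl, ha, -⟩ := h'
  rcases List.prefix_concat_iff.1 hp with rfl | hp
  · rfl
  · exact absurd h.onH_sum (ha.not_onH_of_prefix hp h.ne_nil)

theorem FirstHit.eq_of_append_eq {a b a' b' : List Pt} (h : FirstHit a) (h' : FirstHit a')
    (hab : a ++ b = a' ++ b') : a = a' := by
  rcases List.prefix_or_prefix_of_prefix (List.prefix_append a b)
    (hab ▸ List.prefix_append a' b') with hp | hp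
  exacts [h.eq_of_prefix h' hp, (h'.eq_of_prefix h hp).symm]

theorem not_avoidsH_iff {l : List Pt} : ¬ AvoidsH l ↔ ∃ a b, FirstHit a ∧ a ++ b = l := by
  constructor
  · induction l using List.reverseRecOn with
    | nil => exact fun h => absurd avoidsH_nil h
    | append_singleton c s ih =>
      intro h
      by_cases hc : AvoidsH c
      · have hon : OnH (c ++ [s]).sum := by
          by_contra hon
          exact h (avoidsH_append_singleton.2 ⟨hc, hon⟩)
        exact ⟨c ++ [s], [], ⟨c, s, rfl, hc, hon⟩, List.append_nil _⟩
      · obtain ⟨a, b, ha, rfl⟩ := ih hc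
        exact ⟨a, b ++ [s], ha, (List.append_assoc a b [s]).symm⟩
  · rintro ⟨a, b, ha, rfl⟩ h
    exact h.not_onH_of_prefix (List.prefix_append a b) ha.ne_nil ha.onH_sum

theorem kpoly_mul_walkGF_avoidsH (S : Finset Pt) :
    Kpoly S * walkGF S AvoidsH = 1 - walkGF S FirstHit := by
  have hstep : walkGF S AvoidsH * walkGF S (·.length = 1) =
      walkGF S (fun l => ∃ a b, AvoidsH a ∧ b.length = 1 ∧ a ++ b = l) :=
    walkGF_mul S _ _ fun _ _ _ _ _ hb _ hb' h => List.append_inj_left' h (hb.trans hb'.symm)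
  have hsplit : walkGF S (fun l => ∃ a b, AvoidsH a ∧ b.length = 1 ∧ a ++ b = l) =
      walkGF S (fun l => AvoidsH l ∧ l ≠ []) + walkGF S FirstHit := by
    rw [walkGF_eq_add S _ (fun l => OnH l.sum), add_comm]
    congr 1 <;> refine walkGF_congr S fun l => ⟨?_, ?_⟩
    · rintro ⟨⟨a, b, ha, hb, rfl⟩, hon⟩
      obtain ⟨s, rfl⟩ := List.length_eq_one_iff.1 hb
      exact ⟨avoidsH_append_singleton.2 ⟨ha, hon⟩, by simp⟩
    · rintro ⟨hl, hne⟩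
      obtain ⟨a, s, rfl⟩ := (List.eq_nil_or_concat' l).resolve_left hne
      exact ⟨⟨a, [s], (avoidsH_append_singleton.1 hl).1, rfl, rfl⟩,
        (avoidsH_append_singleton.1 hl).2⟩
    · rintro ⟨⟨a, b, ha, hb, rfl⟩, hon⟩
      obtain ⟨s, rfl⟩ := List.length_eq_one_iff.1 hb
      exact ⟨a, s, rfl, ha, hon⟩
    · rintro ⟨a, s, rfl, ha, hon⟩
      exact ⟨⟨a, [s], ha, rfl, rfl⟩, hon⟩
  have hnil : walkGF S AvoidsH = 1 + walkGF S (fun l => AvoidsH l ∧ l ≠ []) := by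
    rw [walkGF_eq_add S AvoidsH (· = []), ← walkGF_nil S]
    congr 1
    exact walkGF_congr S fun l => ⟨And.right, fun h => ⟨h ▸ avoidsH_nil, h⟩⟩
  rw [Kpoly, ← walkGF_length_eq_one, sub_mul, one_mul, mul_comm, hstep, hsplit]
  linear_combination hnil

theorem walkGF_bilateral (S : Finset Pt) :
    walkGF S (fun l => l.sum.2 = 0) = walkGF S (fun l => l.sum.2 = 0 ∧ AvoidsH l) +
      walkGF S FirstHit * walkGF S (fun l => l.sum.2 = 0) := by
  rw [walkGF_mul S _ _ fun _ _ _ _ ha _ ha' _ h => ha.eq_of_append_eq ha' h,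
    walkGF_eq_add S _ AvoidsH]
  congr 1
  refine walkGF_congr S fun l => ⟨fun ⟨hl, hna⟩ => ?_, ?_⟩
  · obtain ⟨a, b, ha, rfl⟩ := not_avoidsH_iff.1 hna
    refine ⟨a, b, ha, ?_, rfl⟩
    rwa [List.sum_append, Prod.snd_add, ha.onH_sum.1, zero_add] at hl
  · rintro ⟨a, b, ha, hb, rfl⟩
    refine ⟨?_, not_avoidsH_iff.2 ⟨a, b, ha, rfl⟩⟩
    rw [List.sum_append, Prod.snd_add, ha.onH_sum.1, hb, add_zero]

/-- `K(x,y;t) · S(x,y;t) · B(x;t) = S₀(x;t)` in `ℚ[x,x⁻¹,y,y⁻¹][[t]]`,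
where `S` counts walks on the slit plane, `S₀` bilateral walks on the slit plane and
`B` bilateral walks. -/
theorem statement7 (S : Finset Pt)
    (Sgf : PowerSeries L2) (S0 B : PowerSeries L1)
    (hS : ∀ (n : ℕ) (e : Pt),
      (PowerSeries.coeff (R := L2) n Sgf).coeff e = (slitCount S n e : ℚ))
    (hS0 : ∀ (n : ℕ) (i : ℤ),
      (PowerSeries.coeff (R := L1) n S0).coeff i = (slitCount S n (i, 0) : ℚ))
    (hB : ∀ (n : ℕ) (i : ℤ),
      (PowerSeries.coeff (R := L1) n B).coeff i = (walkCount S n (i, 0) : ℚ)) :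
    Kpoly S * Sgf * PowerSeries.map iotaX B = PowerSeries.map iotaX S0 := by
  have hSgf : Sgf = walkGF S AvoidsH := walkGF_eq_of_coeff fun n e => by
    rw [hS, slitCount, ncard_setOf_eq_card_walks]
  have hBgf : map iotaX B = walkGF S (fun l => l.sum.2 = 0) :=
    map_iotaX_eq_walkGF (fun _ h => h) fun n i => by
      rw [hB, walkCount, ncard_setOf_eq_card_walks]
      congr 2
      ext l
      simp only [Finset.mem_filter]
      exact and_congr_right fun _ => ⟨fun h => ⟨by rw [h], h⟩, And.right⟩
  have hS0gf : map iotaX S0 = walkGF S (fun l => l.sum.2 = 0 ∧ AvoidsH l) :=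
    map_iotaX_eq_walkGF (fun _ h => h.1) fun n i => by
      rw [hS0, slitCount, ncard_setOf_eq_card_walks]
      congr 2
      ext l
      simp only [Finset.mem_filter]
      exact and_congr_right fun _ =>
        ⟨fun ⟨hl, h⟩ => ⟨⟨by rw [h], hl⟩, h⟩, fun ⟨⟨_, hl⟩, h⟩ => ⟨hl, h⟩⟩
  rw [hSgf, hBgf, hS0gf, kpoly_mul_walkGF_avoidsH]
  linear_combination walkGF_bilateral S

end SlitPlane
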